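/- arXiv:1210.6174 — 3 statements merged into one kernel-verified Lean document; each statement's English description precedes it below -/
import Mathlib

section
/- For each index i, the natural map Z/d_i → (Z/d_1 ⊕ ... ⊕ Z/d_n)/⟨(1,...,1)⟩, induced by inclusion into the i-th summand followed by the quotient map, is injective if and only if d_i divides lcm(d_1,...,d_{i-1}, d_{i+1},...,d_n). -/
/-!
An element of `ZMod (d i)` maps to zero in the quotient exactly when its `i`-th embedding is an
integer multiple `k • (1, …, 1)`, i.e. when it is the class of some `k` divisible by every `d j`
with `j ≠ i`, equivalently by their lcm `L`. So the kernel is generated by the class of `L`,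
which vanishes iff `d i ∣ L`.
-/

open Finset

theorem Int.natCast_finset_lcm_dvd_iff {ι : Type*} {s : Finset ι} {d : ι → ℕ} {k : ℤ} :
    ((s.lcm d : ℕ) : ℤ) ∣ k ↔ ∀ j ∈ s, (d j : ℤ) ∣ k := by
  simp only [Int.natCast_dvd, Finset.lcm_dvd_iff]

section DiagonalQuotient

variable {ι : Type*} [Fintype ι] [DecidableEq ι] (d : ι → ℕ) (i : ι)

theorem zsmul_one_eq_single_iff (k : ℤ) (x : ZMod (d i)) :
    k • (fun j => (1 : ZMod (d j))) = Pi.single i x ↔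
      (k : ZMod (d i)) = x ∧ (((univ.erase i).lcm d : ℕ) : ℤ) ∣ k := by
  simp only [funext_iff, Pi.smul_apply, zsmul_one, Int.natCast_finset_lcm_dvd_iff, mem_erase,
    mem_univ, and_true]
  constructor
  · intro h
    refine ⟨by simpa using h i, fun j hj => ?_⟩
    rw [← ZMod.intCast_zmod_eq_zero_iff_dvd]
    simpa [Pi.single_eq_of_ne hj] using h j
  · rintro ⟨hi, hdvd⟩ j
    by_cases hj : j = i
    · subst hj
      simpa using hi
    · rw [Pi.single_eq_of_ne hj, ZMod.intCast_zmod_eq_zero_iff_dvd]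
      exact hdvd j hj

theorem ker_mk'_comp_single_eq_zmultiples :
    ((QuotientAddGroup.mk' (AddSubgroup.zmultiples (fun j => (1 : ZMod (d j))))).comp
        (AddMonoidHom.single (fun j => ZMod (d j)) i)).ker =
      AddSubgroup.zmultiples (((univ.erase i).lcm d : ℕ) : ZMod (d i)) := by
  ext x
  simp only [AddMonoidHom.mem_ker, AddMonoidHom.comp_apply, QuotientAddGroup.mk'_apply,
    QuotientAddGroup.eq_zero_iff, AddSubgroup.mem_zmultiples_iff, AddMonoidHom.single_apply]
  simp_rw [zsmul_one_eq_single_iff]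
  constructor
  · rintro ⟨k, rfl, m, rfl⟩
    exact ⟨m, by push_cast; ring⟩
  · rintro ⟨m, rfl⟩
    exact ⟨m * ((univ.erase i).lcm d : ℕ), by push_cast; ring, dvd_mul_left _ _⟩

end DiagonalQuotient

theorem stmt_2_general (n : ℕ) (d : Fin n → ℕ) (i : Fin n) :
    Function.Injective
      ((QuotientAddGroup.mk' (AddSubgroup.zmultiples (fun j => (1 : ZMod (d j))))).comp
        (AddMonoidHom.single (fun j => ZMod (d j)) i)) ↔
      d i ∣ (Finset.univ.erase i).lcm d := by
  rw [← AddMonoidHom.ker_eq_bot_iff, ker_mk'_comp_single_eq_zmultiples,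
    AddSubgroup.zmultiples_eq_bot, ZMod.natCast_eq_zero_iff]

/-- For each index $i$, the natural map
$\mathbb{Z}/d_i \to (\bigoplus_j \mathbb{Z}/d_j)/\langle(1,\dots,1)\rangle$ is injective
iff $d_i \mid \mathrm{lcm}(d_1,\dots,\widehat{d_i},\dots,d_n)$. -/
theorem stmt_2 (n : ℕ) (hn : 2 ≤ n) (d : Fin n → ℕ) (hd : ∀ i, 0 < d i) (i : Fin n) :
    Function.Injective
      ((QuotientAddGroup.mk' (AddSubgroup.zmultiples (fun j => (1 : ZMod (d j))))).comp
        (AddMonoidHom.single (fun j => ZMod (d j)) i)) ↔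
      d i ∣ (Finset.univ.erase i).lcm d :=
  stmt_2_general n d i
end

section
/- Let r_1,...,r_n be elements of a lattice N ≅ Z^s generating a finite-index subgroup, let M = N^∨ = Hom(N,Z), and let ι : M → Z^n be the map m ↦ (m(r_1),...,m(r_n)), which is injective. Then the torsion subgroup of Z^n/ι(M) is isomorphic to N/⟨r_1,...,r_n⟩. -/
/-!
A homomorphism `N → ℤ` killing the finite-index subgroup `L = ⟨r_1, …, r_n⟩` is zero, so `ι`
is injective. By the Smith normal form there are bases `B` of `N` and `c` of `L` with
`c_k = a_k • B_k`. If `P` is the matrix of the `r_i` in the basis `c`, then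
`ι m = (m c_k)_k ᵥ* P`, and `P` has a right inverse because the `r_i` span `L`; so `ι` factors
as the restriction `m ↦ (m c_k)_k` followed by the split injection `t ↦ t ᵥ* P`.
For a split injection `u : X → Y` into a torsion-free group and a finite-index `H ≤ X`, the
torsion of `Y ⧸ u H` is `X ⧸ H`. Here `H = {(a_k m B_k)_k} = {(a_k t_k)_k}`, which is also the
image of `L` under the coordinates of `B`, so `X ⧸ H ≅ N ⧸ L`.
-/

open Function Module QuotientAddGroup

theorem AddMonoidHom.eq_zero_of_le_ker {G H : Type*} [AddCommGroup G] [AddGroup H]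
    [IsAddTorsionFree H] (K : AddSubgroup G) [K.FiniteIndex] (f : G →+ H) (hK : K ≤ f.ker) :
    f = 0 := by
  ext x
  have h := hK (K.nsmul_index_mem x)
  rw [AddMonoidHom.mem_ker, map_nsmul] at h
  exact (nsmul_eq_zero_iff.mp h).resolve_right AddSubgroup.FiniteIndex.index_ne_zero

namespace QuotientAddGroup

variable {A B : Type*} [AddCommGroup A] [AddCommGroup B]

theorem ker_mk'_map_comp {u : A →+ B} (hu : Injective u) (H : AddSubgroup A) :
    ((mk' (H.map u)).comp u).ker = H := by
  ext a
  rw [AddMonoidHom.mem_ker, AddMonoidHom.comp_apply, mk'_apply, eq_zero_iff,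
    AddSubgroup.mem_map_iff_mem hu]

theorem range_mk'_map_comp [IsAddTorsionFree B] {u : A →+ B} {π : B →+ A}
    (h : LeftInverse π u) (H : AddSubgroup A) [H.FiniteIndex] :
    ((mk' (H.map u)).comp u).range = AddCommGroup.torsion (B ⧸ H.map u) := by
  ext x
  rw [AddCommGroup.mem_torsion, isOfFinAddOrder_iff_nsmul_eq_zero]
  constructor
  · rintro ⟨a, rfl⟩
    refine ⟨H.index, Nat.pos_of_ne_zero AddSubgroup.FiniteIndex.index_ne_zero, ?_⟩
    rw [← map_nsmul, ← AddMonoidHom.mem_ker, ker_mk'_map_comp h.injective]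
    exact H.nsmul_index_mem a
  · rintro ⟨k, hk, hkx⟩
    obtain ⟨y, rfl⟩ := mk'_surjective _ x
    rw [← map_nsmul, mk'_apply, eq_zero_iff] at hkx
    obtain ⟨a, -, ha⟩ := hkx
    -- `k • u (π y) = u (π (u a)) = u a = k • y`
    have hy : u (π y) = y := nsmul_right_injective hk.ne' <| by
      simp only [← map_nsmul, ← ha, h a]
    exact ⟨π y, by rw [AddMonoidHom.comp_apply, hy, mk'_apply]⟩

noncomputable def torsionMapEquivOfLeftInverse [IsAddTorsionFree B] {u : A →+ B} {π : B →+ A}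
    (h : LeftInverse π u) (H : AddSubgroup A) [H.FiniteIndex] :
    AddCommGroup.torsion (B ⧸ H.map u) ≃+ A ⧸ H :=
  (AddEquiv.addSubgroupCongr (range_mk'_map_comp h H).symm).trans <|
    (quotientKerEquivRange _).symm.trans (quotientAddEquivOfEq (ker_mk'_map_comp h.injective H))

end QuotientAddGroup

theorem Submodule.span_range_mk_eq_top {R M ι : Type*} [Semiring R] [AddCommMonoid M]
    [Module R M] (r : ι → M) :
    span R (Set.range fun i => (⟨r i, subset_span (Set.mem_range_self i)⟩ :
      span R (Set.range r))) = ⊤ := by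
  have : (Set.range fun i => (⟨r i, subset_span (Set.mem_range_self i)⟩ :
      span R (Set.range r))) = Subtype.val ⁻¹' Set.range r := by
    ext ⟨x, hx⟩
    simp
  rw [this, span_span_coe_preimage]

namespace Module.Basis

variable {R M ι κ : Type*} [CommSemiring R] [AddCommMonoid M] [Module R M]

theorem exists_toMatrix_mul_eq_one [Fintype ι] [DecidableEq κ] (c : Basis κ R M) {v : ι → M}
    (hv : Submodule.span R (Set.range v) = ⊤) :
    ∃ Q : Matrix ι κ R, c.toMatrix v * Q = 1 := by
  choose Q hQ using fun k => (Submodule.mem_span_range_iff_exists_fun R).mp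
    (hv ▸ trivial : c k ∈ Submodule.span R (Set.range v))
  refine ⟨Matrix.of fun i k => Q k i, ?_⟩
  ext k' k
  calc (c.toMatrix v * Matrix.of fun i k => Q k i) k' k = c.repr (∑ i, Q k i • v i) k' := by
        simp [Matrix.mul_apply, c.toMatrix_apply, mul_comm]
    _ = (1 : Matrix κ κ R) k' k := by
        rw [hQ k, c.repr_self, Finsupp.single_apply, Matrix.one_apply]
        exact if_congr eq_comm rfl rfl

theorem vecMul_toMatrix [Fintype κ] (c : Basis κ R M) (v : ι → M) (f : M →ₗ[R] R) :
    Matrix.vecMul (fun k => f (c k)) (c.toMatrix v) = fun i => f (v i) := by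
  ext i
  conv_rhs => rw [← c.sum_toMatrix_smul_self v i, map_sum]
  simp only [Matrix.vecMul, dotProduct, map_smul, smul_eq_mul, mul_comm]

end Module.Basis

theorem Submodule.exists_smith_normal_form_of_index_ne_zero {M : Type*} [AddCommGroup M]
    [Free ℤ M] [Module.Finite ℤ M] {L : Submodule ℤ M} (hL : L.toAddSubgroup.index ≠ 0) :
    ∃ (B : Basis (Free.ChooseBasisIndex ℤ M) ℤ M) (a : Free.ChooseBasisIndex ℤ M → ℤ)
      (c : Basis (Free.ChooseBasisIndex ℤ M) ℤ L), ∀ k, (c k : M) = a k • B k := by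
  obtain ⟨_, snf⟩ := L.smithNormalForm (Free.chooseBasis ℤ M)
  refine L.exists_smith_normal_form_of_rank_eq (Free.chooseBasis ℤ M) ?_
  rw [finrank_eq_card_basis snf.bN, finrank_eq_card_basis (Free.chooseBasis ℤ M),
    Fintype.card_fin, snf.toAddSubgroup_index_ne_zero_iff.mp hL]

namespace Module.Basis

variable {κ M : Type*} [Fintype κ] [AddCommGroup M] {L : Submodule ℤ M}
  {B : Basis κ ℤ M} {c : Basis κ ℤ L} {a : κ → ℤ} (hc : ∀ k, (c k : M) = a k • B k)
include hc

theorem equivFun_equivFun_symm_of_smul (t : κ → ℤ) :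
    B.equivFun (c.equivFun.symm t) = a * t := by
  classical
  ext j
  simp [equivFun_symm_apply, hc, smul_smul, Finsupp.single_apply, mul_comm]

theorem map_equivFun_eq_range_mulLeft :
    L.toAddSubgroup.map B.equivFun.toAddEquiv = (AddMonoidHom.mulLeft a).range := by
  ext y
  constructor
  · rintro ⟨x, hx, rfl⟩
    refine ⟨c.equivFun ⟨x, hx⟩, ?_⟩
    rw [AddMonoidHom.coe_mulLeft, ← B.equivFun_equivFun_symm_of_smul hc,
      LinearEquiv.symm_apply_apply]
    rfl
  · rintro ⟨t, rfl⟩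
    exact ⟨_, (c.equivFun.symm t).2, B.equivFun_equivFun_symm_of_smul hc t⟩

theorem range_pi_eval_eq_range_mulLeft :
    (AddMonoidHom.pi fun k => AddMonoidHom.eval (c k : M) : (M →+ ℤ) →+ κ → ℤ).range =
      (AddMonoidHom.mulLeft a).range := by
  ext y
  constructor
  · rintro ⟨m, rfl⟩
    exact ⟨fun k => m (B k), by ext k; simp [hc]⟩
  · rintro ⟨t, rfl⟩
    classical
    exact ⟨(B.constr ℤ t).toAddMonoidHom, by ext k; simp [hc]⟩

theorem map_equivFun_eq_range_pi_eval :
    L.toAddSubgroup.map B.equivFun.toAddEquiv =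
      (AddMonoidHom.pi fun k => AddMonoidHom.eval (c k : M) : (M →+ ℤ) →+ κ → ℤ).range := by
  rw [B.map_equivFun_eq_range_mulLeft hc, range_pi_eval_eq_range_mulLeft hc]

end Module.Basis

/-- Let $r_1,\dots,r_n$ be elements of a lattice $N$ generating a finite-index subgroup,
$M = \mathrm{Hom}(N,\mathbb{Z})$ and $\iota : M \to \mathbb{Z}^n$, $m \mapsto (m(r_i))_i$.
Then $\iota$ is injective and the torsion subgroup of $\mathbb{Z}^n/\iota(M)$ is isomorphic
to $N/\langle r_1,\dots,r_n\rangle$. -/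
theorem stmt_13 (N : Type*) [AddCommGroup N] [Module.Free ℤ N] [Module.Finite ℤ N]
    (n : ℕ) (r : Fin n → N) (hr : (AddSubgroup.closure (Set.range r)).FiniteIndex)
    (ι : (N →+ ℤ) →+ Fin n → ℤ) (hι : ∀ m i, ι m i = m (r i)) :
    Function.Injective ι ∧
      Nonempty ((AddCommGroup.torsion ((Fin n → ℤ) ⧸ ι.range)) ≃+
        (N ⧸ AddSubgroup.closure (Set.range r))) := by
  set L := Submodule.span ℤ (Set.range r)
  have hL : L.toAddSubgroup = AddSubgroup.closure (Set.range r) :=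
    Submodule.span_int_eq_addSubgroupClosure _
  refine ⟨(injective_iff_map_eq_zero ι).mpr fun m hm => ?_, ?_⟩
  · refine m.eq_zero_of_le_ker (AddSubgroup.closure (Set.range r))
      ((AddSubgroup.closure_le _).mpr ?_)
    rintro _ ⟨i, rfl⟩
    simpa [hι] using congrFun hm i
  obtain ⟨B, a, c, hc⟩ :=
    Submodule.exists_smith_normal_form_of_index_ne_zero (hL ▸ hr.index_ne_zero)
  let v : Fin n → L := fun i => ⟨r i, Submodule.subset_span (Set.mem_range_self i)⟩
  obtain ⟨Q, hQ⟩ := c.exists_toMatrix_mul_eq_one (v := v) (Submodule.span_range_mk_eq_top r)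
  let u := (c.toMatrix v).vecMulLinear.toAddMonoidHom
  have hu : LeftInverse Q.vecMulLinear.toAddMonoidHom u := fun t => by
    simp [u, Matrix.vecMul_vecMul, hQ]
  let res : (N →+ ℤ) →+ _ := AddMonoidHom.pi fun k => AddMonoidHom.eval (c k : N)
  have hres := B.map_equivFun_eq_range_pi_eval hc
  have : res.range.FiniteIndex :=
    ⟨by rw [← hres, AddSubgroup.index_map_equiv, hL]; exact hr.index_ne_zero⟩
  obtain rfl : ι = u.comp res := by
    ext m : 1
    funext i
    rw [hι]
    exact (congrFun (c.vecMul_toMatrix v (m.toIntLinearMap ∘ₗ L.subtype)) i).symm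
  rw [AddMonoidHom.range_comp]
  exact ⟨(torsionMapEquivOfLeftInverse hu res.range).trans
    (QuotientAddGroup.congr _ _ B.equivFun.toAddEquiv (hL ▸ hres)).symm⟩
end

section
/- Let A be a finitely generated abelian group and B an abelian group with a surjection f : B → A whose kernel is a divisible group. Then Hom(B, Z) is a free abelian group of finite rank equal to the rank of A. -/
/-! `Hom(-, ℤ)` kills divisible subgroups (a nonzero integer is not divisible by every `k > 0`)
and torsion, so precomposing with `B → A → A ⧸ Tors(A)` identifies
`Hom(B, ℤ) ≅ Hom(A, ℤ) ≅ Hom(A ⧸ Tors(A), ℤ) ≅ Hom(ℤᵐ, ℤ) ≅ ℤᵐ`. -/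

namespace AddMonoidHom

variable {A B C : Type*} [AddCommGroup A] [AddCommGroup B] [AddCommGroup C]

noncomputable def compEquivOfSurjective (f : B →+ A) (hf : Function.Surjective f)
    (hker : ∀ φ : B →+ C, f.ker ≤ φ.ker) : (A →+ C) ≃+ (B →+ C) :=
  AddEquiv.ofBijective (compHom' f)
    ⟨fun _ _ h => (cancel_right hf).1 h,
     fun φ => ⟨f.liftOfRightInverse _ (Function.rightInverse_surjInv hf) ⟨φ, hker φ⟩,
       f.liftOfRightInverse_comp _ (Function.rightInverse_surjInv hf) _⟩⟩

theorem map_eq_zero_of_forall_nsmul_eq (φ : B →+ ℤ) {x : B}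
    (hx : ∀ k : ℕ, 0 < k → ∃ y, k • y = x) : φ x = 0 := by
  obtain ⟨y, hy⟩ := hx ((φ x).natAbs + 1) (Nat.succ_pos _)
  have hdvd : (((φ x).natAbs + 1 : ℕ) : ℤ) ∣ φ x := by
    refine ⟨φ y, ?_⟩
    conv_lhs => rw [← hy]
    rw [map_nsmul, nsmul_eq_mul]
  exact Int.eq_zero_of_dvd_of_natAbs_lt_natAbs hdvd (by omega)

theorem torsion_le_ker [IsAddTorsionFree C] (φ : A →+ C) : AddCommGroup.torsion A ≤ φ.ker :=
  fun _ hx => (φ.isOfFinAddOrder hx).eq_zero'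

noncomputable def intDualPiEquiv (ι : Type*) [Finite ι] : ((ι → ℤ) →+ ℤ) ≃+ (ι → ℤ) :=
  ((addMonoidHomLequivInt ℤ).trans (Module.piEquiv ι ℤ ℤ).symm).toAddEquiv

end AddMonoidHom

open AddMonoidHom in
theorem stmt_16_general (A B : Type*) [AddCommGroup A] [AddCommGroup B]
    (f : B →+ A) (hf : Function.Surjective f)
    (hdiv : ∀ x ∈ f.ker, ∀ k : ℕ, 0 < k → ∃ y ∈ f.ker, k • y = x)
    (m : ℕ) (hrank : Nonempty ((A ⧸ AddCommGroup.torsion A) ≃+ (Fin m → ℤ))) :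
    Nonempty ((B →+ ℤ) ≃+ (Fin m → ℤ)) := by
  obtain ⟨e⟩ := hrank
  have hker : ∀ φ : B →+ ℤ, f.ker ≤ φ.ker := fun φ x hx =>
    φ.map_eq_zero_of_forall_nsmul_eq fun k hk => (hdiv x hx k hk).imp fun _ => And.right
  have hA : (A →+ ℤ) ≃+ (B →+ ℤ) := compEquivOfSurjective f hf hker
  have hTors : ((A ⧸ AddCommGroup.torsion A) →+ ℤ) ≃+ (A →+ ℤ) :=
    compEquivOfSurjective (QuotientAddGroup.mk' _) (QuotientAddGroup.mk'_surjective _)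
      fun φ => by simpa only [QuotientAddGroup.ker_mk'] using torsion_le_ker φ
  exact ⟨hA.symm.trans <| hTors.symm.trans <| e.addMonoidHomCongrLeft.trans (intDualPiEquiv _)⟩

/-- Let $A$ be a finitely generated abelian group and $f : B \to A$ a surjection with
divisible kernel. Then $\mathrm{Hom}(B,\mathbb{Z})$ is a free abelian group of finite rank
equal to the rank of $A$ (the rank of its free part $A/\mathrm{Tors}(A)$). -/
theorem stmt_16 (A B : Type*) [AddCommGroup A] [AddCommGroup B]
    (hfg : AddGroup.FG A) (f : B →+ A) (hf : Function.Surjective f)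
    (hdiv : ∀ x ∈ f.ker, ∀ k : ℕ, 0 < k → ∃ y ∈ f.ker, k • y = x)
    (m : ℕ) (hrank : Nonempty ((A ⧸ AddCommGroup.torsion A) ≃+ (Fin m → ℤ))) :
    Nonempty ((B →+ ℤ) ≃+ (Fin m → ℤ)) :=
  stmt_16_general A B f hf hdiv m hrank
end
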